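/- Suppose the finite partially ordered set P is pure and let l be the common length of the maximal chains of P̂. Then the dilated order polytope l·O_P contains a unique integer point α in its interior, and the dual polytope of the Gorenstein Fano polytope l·O_P − α coincides with Q_P, i.e. (l·O_P − α)^∨ = Q_P. -/

import Mathlib

open scoped Classical

/-- The poset `P̂ = P ∪ {0̂, 1̂}`: `none` is the minimum `y₀ = 0̂`,
`some none` is the maximum `y_{d+1} = 1̂`, and `some (some i)` is `y_{i+1} ∈ P`. -/
abbrev HatP (d : ℕ) := Option (Option (Fin d))

def hatBot (d : ℕ) : HatP d := none

def hatTop (d : ℕ) : HatP d := some none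

/-- The order of `P̂` induced by a partial order `P` on `Fin d`. -/
def hatLE {d : ℕ} (P : PartialOrder (Fin d)) : HatP d → HatP d → Prop
  | none, _ => True
  | some _, none => False
  | some none, some none => True
  | some none, some (some _) => False
  | some (some _), some none => True
  | some (some a), some (some b) => P.le a b

def hatLT {d : ℕ} (P : PartialOrder (Fin d)) (a b : HatP d) : Prop :=
  hatLE P a b ∧ a ≠ b

/-- `b` covers `a` in `P̂`. -/
def IsCover {d : ℕ} (P : PartialOrder (Fin d)) (a b : HatP d) : Prop :=
  hatLT P a b ∧ ∀ z, ¬ (hatLT P a z ∧ hatLT P z b)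

/-- `{a, b}` is an edge of the Hasse diagram of `P̂` (undirected). -/
def IsEdge {d : ℕ} (P : PartialOrder (Fin d)) (a b : HatP d) : Prop :=
  IsCover P a b ∨ IsCover P b a

/-- `chi y = e_i` if `y = y_i ∈ P`, and `0` if `y ∈ {0̂, 1̂}`. -/
def chi {d : ℕ} : HatP d → (Fin d → ℝ)
  | some (some i) => fun k => if k = i then 1 else 0
  | _ => 0

/-- `ρ(e)` for the edge `e = {a, b}` with `a < b`. -/
def rho {d : ℕ} (a b : HatP d) : Fin d → ℝ := chi a - chi b

/-- `ρ(e)` for an unordered edge `{a, b}`. -/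
noncomputable def rhoE {d : ℕ} (P : PartialOrder (Fin d)) (a b : HatP d) : Fin d → ℝ :=
  if hatLT P a b then rho a b else rho b a

/-- The set `{ρ(e) : e an edge of P̂}`. -/
def edgeVecs {d : ℕ} (P : PartialOrder (Fin d)) : Set (Fin d → ℝ) :=
  {v | ∃ a b, IsCover P a b ∧ v = rho a b}

/-- The polytope `Q_P`, convex hull of `{ρ(e) : e an edge of P̂}`. -/
def QPoly {d : ℕ} (P : PartialOrder (Fin d)) : Set (Fin d → ℝ) :=
  convexHull ℝ (edgeVecs P)

/-- A point of `ℝ^d` all of whose coordinates are integers. -/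
def IsIntegralPt {d : ℕ} (x : Fin d → ℝ) : Prop := ∀ k, ∃ z : ℤ, x k = (z : ℝ)

/-- A facet of a polytope: an exposed face of dimension `d - 1`. -/
def IsFacet {d : ℕ} (Q F : Set (Fin d → ℝ)) : Prop :=
  IsExposed ℝ Q F ∧ Module.finrank ℝ ↥(vectorSpan ℝ F) = d - 1

/-- A cycle `(c 0, c 1, …, c m)` in (the Hasse diagram of) `P̂`;
indices are cyclic in `Fin (m+1)`. -/
def IsCycle {d : ℕ} (P : PartialOrder (Fin d)) {m : ℕ} (c : Fin (m + 1) → HatP d) : Prop :=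
  2 ≤ m ∧ Function.Injective c ∧ ∀ j, IsEdge P (c j) (c (j + 1))

/-- A cycle is special if it has as many ascending steps as descending steps. -/
def CycleSpecial {d : ℕ} (P : PartialOrder (Fin d)) {m : ℕ} (c : Fin (m + 1) → HatP d) : Prop :=
  Nat.card {j : Fin (m + 1) // hatLT P (c j) (c (j + 1))} =
    Nat.card {j : Fin (m + 1) // hatLT P (c (j + 1)) (c j)}

/-- A very special cycle: special, and not containing both `0̂` and `1̂`. -/
def VerySpecialCycle {d : ℕ} (P : PartialOrder (Fin d)) {m : ℕ}
    (c : Fin (m + 1) → HatP d) : Prop :=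
  IsCycle P c ∧ CycleSpecial P c ∧
    ¬ (hatBot d ∈ Set.range c ∧ hatTop d ∈ Set.range c)

/-- A path `(c 0, c 1, …, c m)` in (the Hasse diagram of) `P̂`. -/
def IsPath {d : ℕ} (P : PartialOrder (Fin d)) {m : ℕ} (c : Fin (m + 1) → HatP d) : Prop :=
  Function.Injective c ∧ ∀ j : Fin m, IsEdge P (c j.castSucc) (c j.succ)

/-- A path is special if it has as many ascending steps as descending steps. -/
def PathSpecial {d : ℕ} (P : PartialOrder (Fin d)) {m : ℕ} (c : Fin (m + 1) → HatP d) : Prop :=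
  Nat.card {j : Fin m // hatLT P (c j.castSucc) (c j.succ)} =
    Nat.card {j : Fin m // hatLT P (c j.succ) (c j.castSucc)}

/-- `μ` is the level function of a special cycle `c`. -/
def IsMuCycle {d : ℕ} (P : PartialOrder (Fin d)) {m : ℕ} (c : Fin (m + 1) → HatP d)
    (μ : Fin (m + 1) → ℕ) : Prop :=
  (∀ j, (hatLT P (c j) (c (j + 1)) → μ (j + 1) = μ j + 1) ∧
        (hatLT P (c (j + 1)) (c j) → μ j = μ (j + 1) + 1)) ∧
  ∃ j, μ j = 0

/-- `μ` is the level function of a special path `c`. -/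
def IsMuPath {d : ℕ} (P : PartialOrder (Fin d)) {m : ℕ} (c : Fin (m + 1) → HatP d)
    (μ : Fin (m + 1) → ℕ) : Prop :=
  (∀ j : Fin m, (hatLT P (c j.castSucc) (c j.succ) → μ j.succ = μ j.castSucc + 1) ∧
        (hatLT P (c j.succ) (c j.castSucc) → μ j.castSucc = μ j.succ + 1)) ∧
  ∃ j, μ j = 0

/-- The distance `dist_{P̂}(y, z)`: the smallest `s` for which there is a saturated
chain `y = z_0 < z_1 < ⋯ < z_s = z` in `P̂`. -/
noncomputable def hatDist {d : ℕ} (P : PartialOrder (Fin d)) (y z : HatP d) : ℕ :=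
  sInf {s | ∃ c : Fin (s + 1) → HatP d, c 0 = y ∧ c (Fin.last s) = z ∧
    ∀ j : Fin s, IsCover P (c j.castSucc) (c j.succ)}

/-- `P̂` has a very special cycle satisfying the inequalities (1) and (2). -/
def HasBadCycle {d : ℕ} (P : PartialOrder (Fin d)) : Prop :=
  ∃ (m : ℕ) (c : Fin (m + 1) → HatP d) (μ : Fin (m + 1) → ℕ),
    VerySpecialCycle P c ∧ IsMuCycle P c μ ∧
    (∀ a b, hatLT P (c b) (c a) →
      (μ a : ℤ) - (μ b : ℤ) ≤ (hatDist P (c b) (c a) : ℤ)) ∧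
    (∀ a b, (μ a : ℤ) - (μ b : ℤ) ≤
      (hatDist P (hatBot d) (c a) : ℤ) + (hatDist P (c b) (hatTop d) : ℤ))

/-- `P̂` has a special path from `0̂` to `1̂` satisfying the inequality (3). -/
def HasBadPath {d : ℕ} (P : PartialOrder (Fin d)) : Prop :=
  ∃ (m : ℕ) (c : Fin (m + 1) → HatP d) (μ : Fin (m + 1) → ℕ),
    IsPath P c ∧ PathSpecial P c ∧ c 0 = hatBot d ∧ c (Fin.last m) = hatTop d ∧
    IsMuPath P c μ ∧
    (∀ a b, hatLT P (c b) (c a) →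
      (μ a : ℤ) - (μ b : ℤ) ≤ (hatDist P (c b) (c a) : ℤ))

/-- A polytope is simplicial (ℚ-factorial) if each of its proper faces is a simplex. -/
def SimplicialPoly {d : ℕ} (Q : Set (Fin d → ℝ)) : Prop :=
  ∀ F : Set (Fin d → ℝ), IsExposed ℝ Q F → F ≠ Q →
    AffineIndependent ℝ (fun p : Set.extremePoints ℝ F => (p : Fin d → ℝ))

/-- A polytope is smooth if the vertices of each facet form a ℤ-basis of `ℤ^d`. -/
def SmoothPoly {d : ℕ} (Q : Set (Fin d → ℝ)) : Prop :=
  ∀ F : Set (Fin d → ℝ), IsFacet Q F →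
    ∃ b : Module.Basis (Fin d) ℤ (Fin d → ℤ),
      (Set.range fun i => fun k => ((b i k : ℤ) : ℝ)) = Set.extremePoints ℝ F

/-- A maximal chain `0̂ = c 0 < c 1 < ⋯ < c m = 1̂` of `P̂` (of length `m`). -/
def IsMaxChainHat {d : ℕ} (P : PartialOrder (Fin d)) {m : ℕ} (c : Fin (m + 1) → HatP d) : Prop :=
  c 0 = hatBot d ∧ c (Fin.last m) = hatTop d ∧
    ∀ j : Fin m, IsCover P (c j.castSucc) (c j.succ)

/-- `P` is pure: all maximal chains of `P̂` have the same length. -/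
def PureP {d : ℕ} (P : PartialOrder (Fin d)) : Prop :=
  ∀ (m m' : ℕ) (c : Fin (m + 1) → HatP d) (c' : Fin (m' + 1) → HatP d),
    IsMaxChainHat P c → IsMaxChainHat P c' → m = m'
open scoped Pointwise

/-- The order polytope `O_P` of `P`. -/
def orderPoly {d : ℕ} (P : PartialOrder (Fin d)) : Set (Fin d → ℝ) :=
  {x | (∀ i, 0 ≤ x i ∧ x i ≤ 1) ∧ ∀ i j, P.le i j → x i ≤ x j}

/-- The dual polytope `Q^∨ = {x : ⟨x, y⟩ ≤ 1 for all y ∈ Q}`. -/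
def dualPoly {d : ℕ} (Q : Set (Fin d → ℝ)) : Set (Fin d → ℝ) :=
  {x | ∀ y ∈ Q, (∑ k, x k * y k) ≤ 1}

section Infra

variable {d : ℕ} {P : PartialOrder (Fin d)}

/-- A saturated chain of covers from `u` to `v` of length `s`. -/
def ChainP (P : PartialOrder (Fin d)) (s : ℕ) (c : Fin (s + 1) → HatP d)
    (u v : HatP d) : Prop :=
  c 0 = u ∧ c (Fin.last s) = v ∧ ∀ j : Fin s, IsCover P (c j.castSucc) (c j.succ)

lemma hatLE_refl (a : HatP d) : hatLE P a a := by
  rcases a with _ | (_ | i)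
  · trivial
  · trivial
  · exact P.le_refl i

lemma hatLE_trans {a b c : HatP d} (h1 : hatLE P a b) (h2 : hatLE P b c) :
    hatLE P a c := by
  rcases a with _ | (_ | a) <;> rcases b with _ | (_ | b) <;> rcases c with _ | (_ | c) <;>
    first
      | trivial
      | exact h1.elim
      | exact h2.elim
      | exact P.le_trans _ _ _ h1 h2

lemma hatLE_antisymm {a b : HatP d} (h1 : hatLE P a b) (h2 : hatLE P b a) : a = b := by
  rcases a with _ | (_ | a) <;> rcases b with _ | (_ | b) <;>
    first
      | rfl
      | exact h1.elim
      | exact h2.elim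
      | exact congrArg (fun i => some (some i)) (P.le_antisymm _ _ h1 h2)

lemma hatLT_of_lt_of_le {a b c : HatP d} (h1 : hatLT P a b) (h2 : hatLE P b c) :
    hatLT P a c := by
  refine ⟨hatLE_trans h1.1 h2, fun h => h1.2 ?_⟩
  subst h
  exact hatLE_antisymm h1.1 h2

lemma hatLT_of_le_of_lt {a b c : HatP d} (h1 : hatLE P a b) (h2 : hatLT P b c) :
    hatLT P a c := by
  refine ⟨hatLE_trans h1 h2.1, fun h => h2.2 ?_⟩
  subst h
  exact hatLE_antisymm h2.1 h1

lemma hatLE_bot (y : HatP d) : hatLE P (hatBot d) y := trivial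

lemma hatLE_top (y : HatP d) : hatLE P y (hatTop d) := by
  rcases y with _ | (_ | i) <;> trivial

/-- There is a cover step from `u` towards `v` whenever `u < v`. -/
lemma exists_cover_le_aux : ∀ n (u v : HatP d),
    (Finset.univ.filter fun z => hatLT P u z ∧ hatLE P z v).card ≤ n →
    hatLT P u v → ∃ w, IsCover P u w ∧ hatLE P w v := by
  intro n
  induction n with
  | zero =>
    intro u v hcard h
    exfalso
    have hv : v ∈ (Finset.univ.filter fun z => hatLT P u z ∧ hatLE P z v) := by
      simp [h, hatLE_refl]
    have := Finset.card_pos.mpr ⟨v, hv⟩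
    omega
  | succ n ih =>
    intro u v hcard h
    by_cases hc : IsCover P u v
    · exact ⟨v, hc, hatLE_refl v⟩
    · have hz : ∃ z, hatLT P u z ∧ hatLT P z v := by
        unfold IsCover at hc
        push_neg at hc
        exact hc h
      obtain ⟨z, hz1, hz2⟩ := hz
      have hss : (Finset.univ.filter fun x => hatLT P u x ∧ hatLE P x z) ⊂
          (Finset.univ.filter fun x => hatLT P u x ∧ hatLE P x v) := by
        constructor
        · intro x hx
          simp only [Finset.mem_filter, Finset.mem_univ, true_and] at hx ⊢
          exact ⟨hx.1, hatLE_trans hx.2 hz2.1⟩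
        · intro hsub
          have hv : v ∈ (Finset.univ.filter fun x => hatLT P u x ∧ hatLE P x v) := by
            simp [h, hatLE_refl]
          have := hsub hv
          simp only [Finset.mem_filter, Finset.mem_univ, true_and] at this
          exact (hatLT_of_lt_of_le hz2 this.2).2 rfl
      have hlt := Finset.card_lt_card hss
      obtain ⟨w, hw1, hw2⟩ := ih u z (by omega) hz1
      exact ⟨w, hw1, hatLE_trans hw2 hz2.1⟩

lemma exists_cover_le {u v : HatP d} (h : hatLT P u v) :
    ∃ w, IsCover P u w ∧ hatLE P w v :=
  exists_cover_le_aux _ u v le_rfl h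

lemma chain_const (u : HatP d) : ChainP P 0 (fun _ => u) u u :=
  ⟨rfl, rfl, fun j => j.elim0⟩

lemma chain_prepend {u w v : HatP d} (hc : IsCover P u w) {s} {c : Fin (s + 1) → HatP d}
    (h : ChainP P s c w v) : ChainP P (s + 1) (Fin.cases u c) u v := by
  refine ⟨rfl, ?_, ?_⟩
  · rw [← Fin.succ_last]
    simp only [Fin.cases_succ]
    exact h.2.1
  · intro j
    induction j using Fin.cases with
    | zero =>
      simp only [Fin.castSucc_zero, Fin.cases_zero, Fin.cases_succ, h.1]
      exact hc
    | succ k =>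
      rw [← Fin.succ_castSucc]
      simp only [Fin.cases_succ]
      exact h.2.2 k

lemma chain_tail {u v : HatP d} {s} {c : Fin (s + 1 + 1) → HatP d}
    (h : ChainP P (s + 1) c u v) : ChainP P s (fun j => c j.succ) (c 1) v := by
  refine ⟨?_, ?_, ?_⟩
  · show c (Fin.succ 0) = c 1
    rw [Fin.succ_zero_eq_one]
  · show c (Fin.last s).succ = v
    rw [Fin.succ_last]
    exact h.2.1
  · intro j
    show IsCover P (c j.castSucc.succ) (c j.succ.succ)
    rw [Fin.succ_castSucc]
    exact h.2.2 j.succ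

lemma chain_head {u v : HatP d} {s} {c : Fin (s + 1 + 1) → HatP d}
    (h : ChainP P (s + 1) c u v) : IsCover P u (c 1) := by
  have h0 := h.2.2 0
  rw [Fin.castSucc_zero, h.1, Fin.succ_zero_eq_one] at h0
  exact h0

lemma chain_concat : ∀ s (c1 : Fin (s + 1) → HatP d) u w, ChainP P s c1 u w →
    ∀ t (c2 : Fin (t + 1) → HatP d) v, ChainP P t c2 w v →
    ∃ m, m = s + t ∧ ∃ c : Fin (m + 1) → HatP d, ChainP P m c u v := by
  intro s
  induction s with
  | zero =>
    intro c1 u w h1 t c2 v h2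
    have huw : u = w := by rw [← h1.1, ← h1.2.1]; rfl
    exact ⟨t, (Nat.zero_add t).symm, c2, huw ▸ h2⟩
  | succ s ih =>
    intro c1 u w h1 t c2 v h2
    obtain ⟨m, hm, c, hc⟩ := ih _ _ _ (chain_tail h1) t c2 v h2
    exact ⟨m + 1, by omega, Fin.cases u c, chain_prepend (chain_head h1) hc⟩

lemma exists_chain_aux : ∀ n (u v : HatP d),
    (Finset.univ.filter fun z => hatLT P u z ∧ hatLE P z v).card ≤ n →
    hatLE P u v → ∃ s, ∃ c : Fin (s + 1) → HatP d, ChainP P s c u v := by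
  intro n
  induction n with
  | zero =>
    intro u v hcard h
    by_cases huv : u = v
    · exact ⟨0, fun _ => u, huv ▸ chain_const u⟩
    · exfalso
      have hv : v ∈ (Finset.univ.filter fun z => hatLT P u z ∧ hatLE P z v) := by
        simp [hatLE_refl]
        exact ⟨h, huv⟩
      have := Finset.card_pos.mpr ⟨v, hv⟩
      omega
  | succ n ih =>
    intro u v hcard h
    by_cases huv : u = v
    · exact ⟨0, fun _ => u, huv ▸ chain_const u⟩
    · obtain ⟨w, hw1, hw2⟩ := exists_cover_le (P := P) ⟨h, huv⟩
      have hss : (Finset.univ.filter fun x => hatLT P w x ∧ hatLE P x v) ⊂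
          (Finset.univ.filter fun x => hatLT P u x ∧ hatLE P x v) := by
        constructor
        · intro x hx
          simp only [Finset.mem_filter, Finset.mem_univ, true_and] at hx ⊢
          exact ⟨hatLT_of_lt_of_le hw1.1 hx.1.1, hx.2⟩
        · intro hsub
          have hwmem : w ∈ (Finset.univ.filter fun x => hatLT P u x ∧ hatLE P x v) := by
            simp only [Finset.mem_filter, Finset.mem_univ, true_and]
            exact ⟨hw1.1, hw2⟩
          have : w ∉ (Finset.univ.filter fun x => hatLT P w x ∧ hatLE P x v) := by
            simp only [Finset.mem_filter, Finset.mem_univ, true_and]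
            intro hcon
            exact hcon.1.2 rfl
          exact this (hsub hwmem)
      have hlt := Finset.card_lt_card hss
      obtain ⟨s, c, hc⟩ := ih w v (by omega) hw2
      exact ⟨s + 1, Fin.cases u c, chain_prepend hw1 hc⟩

end Infra

section Height

variable {d : ℕ} {P : PartialOrder (Fin d)} {l : ℕ}

lemma exists_chain {u v : HatP d} (h : hatLE P u v) :
    ∃ s, ∃ c : Fin (s + 1) → HatP d, ChainP P s c u v :=
  exists_chain_aux _ u v le_rfl h

lemma chain_maxChain {m : ℕ} {c : Fin (m + 1) → HatP d}
    (h : ChainP P m c (hatBot d) (hatTop d)) : IsMaxChainHat P c :=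
  ⟨h.1, h.2.1, h.2.2⟩

/-- All saturated chains from `0̂` to `y` have the same length (purity). -/
lemma chain_bot_len (hl : ∀ (m : ℕ) (c : Fin (m + 1) → HatP d), IsMaxChainHat P c → m = l)
    {s s' : ℕ} {y : HatP d} {c : Fin (s + 1) → HatP d} {c' : Fin (s' + 1) → HatP d}
    (h : ChainP P s c (hatBot d) y) (h' : ChainP P s' c' (hatBot d) y) : s = s' := by
  obtain ⟨t, ct, hct⟩ := exists_chain (P := P) (hatLE_top y)
  obtain ⟨m1, hm1, cm1, hc1⟩ := chain_concat s c (hatBot d) y h t ct (hatTop d) hct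
  obtain ⟨m2, hm2, cm2, hc2⟩ := chain_concat s' c' (hatBot d) y h' t ct (hatTop d) hct
  have e1 := hl m1 cm1 (chain_maxChain hc1)
  have e2 := hl m2 cm2 (chain_maxChain hc2)
  omega

/-- The height of `y` in `P̂`. -/
noncomputable def htN (P : PartialOrder (Fin d)) (y : HatP d) : ℕ :=
  (exists_chain (P := P) (hatLE_bot y)).choose

lemma htN_spec (P : PartialOrder (Fin d)) (y : HatP d) :
    ∃ c : Fin (htN P y + 1) → HatP d, ChainP P (htN P y) c (hatBot d) y :=
  (exists_chain (P := P) (hatLE_bot y)).choose_spec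

lemma htN_bot (hl : ∀ (m : ℕ) (c : Fin (m + 1) → HatP d), IsMaxChainHat P c → m = l) :
    htN P (hatBot d) = 0 := by
  obtain ⟨c, hc⟩ := htN_spec P (hatBot d)
  exact chain_bot_len hl hc (chain_const (hatBot d))

lemma htN_add (hl : ∀ (m : ℕ) (c : Fin (m + 1) → HatP d), IsMaxChainHat P c → m = l)
    {s : ℕ} {a b : HatP d} {c : Fin (s + 1) → HatP d} (h : ChainP P s c a b) :
    htN P b = htN P a + s := by
  obtain ⟨ca, hca⟩ := htN_spec P a
  obtain ⟨cb, hcb⟩ := htN_spec P b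
  obtain ⟨m, hm, cm, hcm⟩ := chain_concat _ ca (hatBot d) a hca s c b h
  have := chain_bot_len hl hcb hcm
  omega

lemma htN_top (hl : ∀ (m : ℕ) (c : Fin (m + 1) → HatP d), IsMaxChainHat P c → m = l) :
    htN P (hatTop d) = l := by
  obtain ⟨c, hc⟩ := htN_spec P (hatTop d)
  exact hl _ c (chain_maxChain hc)

lemma chain_pair {a b : HatP d} (h : IsCover P a b) :
    ChainP P 1 (fun j => if j = 0 then a else b) a b := by
  refine ⟨if_pos rfl, if_neg (by decide), ?_⟩
  intro j
  have hj : j = 0 := Subsingleton.elim j 0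
  subst hj
  rw [Fin.castSucc_zero, Fin.succ_zero_eq_one]
  simpa using h

lemma htN_cover (hl : ∀ (m : ℕ) (c : Fin (m + 1) → HatP d), IsMaxChainHat P c → m = l)
    {a b : HatP d} (h : IsCover P a b) : htN P b = htN P a + 1 :=
  htN_add hl (chain_pair h)

lemma chain_zero_eq {c : Fin 1 → HatP d} {u v : HatP d} (h : ChainP P 0 c u v) : u = v := by
  rw [← h.1, ← h.2.1]; rfl

lemma htN_lt (hl : ∀ (m : ℕ) (c : Fin (m + 1) → HatP d), IsMaxChainHat P c → m = l)
    {a b : HatP d} (h : hatLT P a b) : htN P a < htN P b := by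
  obtain ⟨s, c, hc⟩ := exists_chain (P := P) h.1
  have hadd := htN_add hl hc
  rcases Nat.eq_zero_or_pos s with hs | hs
  · exfalso; subst hs; exact h.2 (chain_zero_eq hc)
  · omega

/-- Summing a step inequality along a chain. -/
lemma chain_step_sum {W : HatP d → ℝ} {δ : ℝ}
    (hW : ∀ a b, IsCover P a b → W a + δ ≤ W b) :
    ∀ s (c : Fin (s + 1) → HatP d) u v, ChainP P s c u v → W u + (s : ℝ) * δ ≤ W v := by
  intro s
  induction s with
  | zero =>
    intro c u v h
    have := chain_zero_eq h
    subst this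
    simp
  | succ s ih =>
    intro c u v h
    have h1 := hW _ _ (chain_head h)
    have h2 := ih _ _ _ (chain_tail h)
    push_cast
    push_cast at h2
    linarith

/-- Telescoping sum of `ρ` along a chain. -/
lemma chain_sum_rho : ∀ s (c : Fin (s + 1) → HatP d) u v, ChainP P s c u v →
    ∑ j : Fin s, rho (c j.castSucc) (c j.succ) = chi u - chi v := by
  intro s
  induction s with
  | zero =>
    intro c u v h
    have := chain_zero_eq h
    subst this
    simp
  | succ s ih =>
    intro c u v h
    rw [Fin.sum_univ_succ]
    have htail := ih _ _ _ (chain_tail h)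
    have hterms : ∀ j : Fin s, rho (c j.succ.castSucc) (c j.succ.succ)
        = rho (c j.castSucc.succ) (c j.succ.succ) := by
      intro j
      rw [Fin.succ_castSucc]
    calc rho (c (Fin.castSucc 0)) (c (Fin.succ 0)) +
          ∑ j : Fin s, rho (c j.succ.castSucc) (c j.succ.succ)
        = rho u (c 1) + ∑ j : Fin s, rho (c j.castSucc.succ) (c j.succ.succ) := by
          rw [Fin.castSucc_zero, h.1, Fin.succ_zero_eq_one]
          rw [Finset.sum_congr rfl (fun j _ => hterms j)]
      _ = rho u (c 1) + (chi (c 1) - chi v) := by rw [htail]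
      _ = chi u - chi v := by
          unfold rho
          abel

end Height

section Poly

variable {d : ℕ} {P : PartialOrder (Fin d)} {l : ℕ}

lemma not_hatLT_top (b : HatP d) : ¬ hatLT P (hatTop d) b := by
  rcases b with _ | (_ | b)
  · exact fun h => h.1.elim
  · exact fun h => h.2 rfl
  · exact fun h => h.1.elim

lemma not_hatLT_bot (a : HatP d) : ¬ hatLT P a (hatBot d) := by
  rcases a with _ | (_ | a)
  · exact fun h => h.2 rfl
  · exact fun h => h.1.elim
  · exact fun h => h.1.elim

/-- Extend a vector `g : Fin d → ℝ` to `P̂`, with value `0` at `0̂` and `r` at `1̂`. -/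
def extV (r : ℝ) (g : Fin d → ℝ) : HatP d → ℝ
  | none => 0
  | some none => r
  | some (some i) => g i

lemma sum_chi_mul (y : HatP d) (g : Fin d → ℝ) :
    ∑ k, chi y k * g k = extV 0 g y := by
  rcases y with _ | (_ | i)
  · simp [chi, extV]
  · simp [chi, extV]
  · simp only [chi, extV, ite_mul, one_mul, zero_mul]
    simp

lemma sum_rho_mul (a b : HatP d) (g : Fin d → ℝ) :
    ∑ k, rho a b k * g k = extV 0 g a - extV 0 g b := by
  unfold rho
  simp only [Pi.sub_apply, sub_mul]
  rw [Finset.sum_sub_distrib, sum_chi_mul, sum_chi_mul]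

lemma mem_smul_order (hl0 : 0 < l) {x : Fin d → ℝ} :
    x ∈ (l : ℝ) • orderPoly P ↔
      (∀ i, 0 ≤ x i ∧ x i ≤ l) ∧ ∀ i j, P.le i j → x i ≤ x j := by
  have hlr : (0 : ℝ) < l := by exact_mod_cast hl0
  constructor
  · intro hx
    obtain ⟨y, hy, rfl⟩ := Set.mem_smul_set.mp hx
    constructor
    · intro i
      have h1 := (hy.1 i).1
      have h2 := (hy.1 i).2
      have he : ((l : ℝ) • y) i = l * y i := rfl
      rw [he]
      constructor
      · positivity
      · nlinarith
    · intro i j hij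
      have := hy.2 i j hij
      show (l : ℝ) * y i ≤ l * y j
      nlinarith
  · intro hx
    refine Set.mem_smul_set.mpr ⟨fun i => x i / l, ⟨?_, ?_⟩, ?_⟩
    · intro i
      refine ⟨div_nonneg (hx.1 i).1 (le_of_lt hlr), ?_⟩
      rw [div_le_one hlr]
      exact (hx.1 i).2
    · intro i j hij
      have := hx.2 i j hij
      show x i / (l : ℝ) ≤ x j / (l : ℝ)
      gcongr
    · funext i
      show (l : ℝ) * (x i / l) = x i
      field_simp

lemma cover_extV_mono (hl1 : 1 ≤ l) {g : Fin d → ℝ} (hg1 : ∀ i, 0 ≤ g i ∧ g i ≤ l)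
    (hg2 : ∀ i j, P.le i j → g i ≤ g j) {a b : HatP d} (h : IsCover P a b) :
    extV (l : ℝ) g a ≤ extV (l : ℝ) g b := by
  rcases a with _ | (_ | i)
  · rcases b with _ | (_ | j)
    · exact le_refl _
    · show (0 : ℝ) ≤ l
      positivity
    · exact (hg1 j).1
  · exact absurd h.1 (not_hatLT_top _)
  · rcases b with _ | (_ | j)
    · exact absurd h.1 (not_hatLT_bot _)
    · exact (hg1 i).2
    · exact hg2 i j h.1.1

/-- The interior integer point, given by heights. -/
noncomputable def alphaP (P : PartialOrder (Fin d)) : Fin d → ℝ :=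
  fun i => (htN P (some (some i)) : ℝ)

end Poly

/-- if `P` is pure and `l` is the common length of the maximal chains of
`P̂`, then the dilated order polytope `l·O_P` contains a unique integer point `α` in its
interior, and the dual polytope of `l·O_P - α` coincides with `Q_P`. -/
theorem stmt17 (d : ℕ) (hd : 1 ≤ d) (P : PartialOrder (Fin d)) (l : ℕ)
    (hl : ∀ (m : ℕ) (c : Fin (m + 1) → HatP d), IsMaxChainHat P c → m = l) :
    ∃ α : Fin d → ℝ, IsIntegralPt α ∧ α ∈ interior ((l : ℝ) • orderPoly P) ∧
      (∀ β : Fin d → ℝ, IsIntegralPt β → β ∈ interior ((l : ℝ) • orderPoly P) → β = α) ∧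
      dualPoly ((fun x => x - α) '' ((l : ℝ) • orderPoly P)) = QPoly P := by
  classical
  have htop : htN P (hatTop d) = l := htN_top hl
  have hbot : htN P (hatBot d) = 0 := htN_bot hl
  have hbot' : htN P (none : HatP d) = 0 := hbot
  have htop' : htN P (some none : HatP d) = l := htop
  have hlt : ∀ {a b : HatP d}, hatLT P a b → htN P a < htN P b := fun h => htN_lt hl h
  have hα1 : ∀ i : Fin d, 1 ≤ htN P (some (some i)) := by
    intro i
    have h1 : hatLT P (hatBot d) (some (some i)) := ⟨trivial, by simp [hatBot]⟩
    have := hlt h1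
    omega
  have hα2 : ∀ i : Fin d, htN P (some (some i)) + 1 ≤ l := by
    intro i
    have h1 : hatLT P (some (some i)) (hatTop d) := ⟨trivial, by simp [hatTop]⟩
    have := hlt h1
    rw [htop] at this
    omega
  have hl1 : 1 ≤ l := by
    have := hα1 ⟨0, hd⟩
    have := hα2 ⟨0, hd⟩
    omega
  have hl0 : 0 < l := hl1
  have hlr : (0 : ℝ) < l := by exact_mod_cast hl0
  have hmono : ∀ i j, P.le i j → i ≠ j →
      htN P (some (some i)) + 1 ≤ htN P (some (some j)) := by
    intro i j hij hne
    have h1 : hatLT P (some (some i)) (some (some j)) := ⟨hij, by simp [hne]⟩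
    have := hlt h1
    omega
  have hA1 : ∀ i, (1 : ℝ) ≤ alphaP P i := by
    intro i
    unfold alphaP
    exact_mod_cast hα1 i
  have hA2 : ∀ i, alphaP P i + 1 ≤ (l : ℝ) := by
    intro i
    unfold alphaP
    exact_mod_cast hα2 i
  have hAm : ∀ i j, P.le i j → i ≠ j → alphaP P i + 1 ≤ alphaP P j := by
    intro i j hij hne
    unfold alphaP
    exact_mod_cast hmono i j hij hne
  have hhalf : (0 : ℝ) < 2⁻¹ := by norm_num
  refine ⟨alphaP P, ?_, ?_, ?_, ?_⟩
  · -- integrality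
    intro k
    exact ⟨htN P (some (some k)), by simp [alphaP]⟩
  · -- interior membership
    apply mem_interior.mpr
    refine ⟨⋂ i : Fin d, ({x : Fin d → ℝ | alphaP P i - 2⁻¹ < x i} ∩
      {x : Fin d → ℝ | x i < alphaP P i + 2⁻¹}), ?_, ?_, ?_⟩
    · intro x hx
      simp only [Set.mem_iInter, Set.mem_inter_iff, Set.mem_setOf_eq] at hx
      apply (mem_smul_order hl0).mpr
      constructor
      · intro i
        have h1 := (hx i).1
        have h2 := (hx i).2
        have := hA1 i
        have := hA2 i
        constructor <;> linarith
      · intro i j hij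
        by_cases hne : i = j
        · subst hne; exact le_refl _
        · have := hAm i j hij hne
          have h1 := (hx i).2
          have h2 := (hx j).1
          linarith
    · exact isOpen_iInter_of_finite fun i =>
        (isOpen_lt continuous_const (continuous_apply i)).inter
        (isOpen_lt (continuous_apply i) continuous_const)
    · simp only [Set.mem_iInter, Set.mem_inter_iff, Set.mem_setOf_eq]
      intro i
      constructor <;> linarith
  · -- uniqueness
    intro β hβint hβin
    rw [mem_interior_iff_mem_nhds, Metric.mem_nhds_iff] at hβin
    obtain ⟨ε, hε, hball⟩ := hβin
    have hβS' := (mem_smul_order hl0).mp (hball (Metric.mem_ball_self hε))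
    have hstrict0 : ∀ k, 0 < β k := by
      intro k
      have hy : Function.update β k (β k - ε / 2) ∈ Metric.ball β ε := by
        rw [Metric.mem_ball, dist_pi_lt_iff hε]
        intro b
        rcases eq_or_ne b k with rfl | hbk
        · rw [Function.update_self, Real.dist_eq]
          have he : β b - ε / 2 - β b = -(ε / 2) := by ring
          rw [he, abs_neg, abs_of_pos (by linarith)]
          linarith
        · rw [Function.update_of_ne hbk, dist_self]
          exact hε
      have hmem := ((mem_smul_order hl0).mp (hball hy)).1 k
      rw [Function.update_self] at hmem
      linarith [hmem.1]
    have hstrictl : ∀ k, β k < l := by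
      intro k
      have hy : Function.update β k (β k + ε / 2) ∈ Metric.ball β ε := by
        rw [Metric.mem_ball, dist_pi_lt_iff hε]
        intro b
        rcases eq_or_ne b k with rfl | hbk
        · rw [Function.update_self, Real.dist_eq]
          have he : β b + ε / 2 - β b = ε / 2 := by ring
          rw [he, abs_of_pos (by linarith)]
          linarith
        · rw [Function.update_of_ne hbk, dist_self]
          exact hε
      have hmem := ((mem_smul_order hl0).mp (hball hy)).1 k
      rw [Function.update_self] at hmem
      linarith [hmem.2]
    have hstrictm : ∀ i j, P.le i j → i ≠ j → β i < β j := by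
      intro i j hij hne
      have hy : Function.update (Function.update β i (β i + ε / 2)) j (β j - ε / 2)
          ∈ Metric.ball β ε := by
        rw [Metric.mem_ball, dist_pi_lt_iff hε]
        intro b
        rcases eq_or_ne b j with rfl | hbj
        · rw [Function.update_self, Real.dist_eq]
          have he : β b - ε / 2 - β b = -(ε / 2) := by ring
          rw [he, abs_neg, abs_of_pos (by linarith)]
          linarith
        · rw [Function.update_of_ne hbj]
          rcases eq_or_ne b i with rfl | hbi
          · rw [Function.update_self, Real.dist_eq]
            have he : β b + ε / 2 - β b = ε / 2 := by ring
            rw [he, abs_of_pos (by linarith)]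
            linarith
          · rw [Function.update_of_ne hbi, dist_self]
            exact hε
      have hmem := ((mem_smul_order hl0).mp (hball hy)).2 i j hij
      rw [Function.update_self, Function.update_of_ne hne, Function.update_self] at hmem
      linarith
    have hW : ∀ a b, IsCover P a b → extV (l : ℝ) β a + 1 ≤ extV (l : ℝ) β b := by
      intro a b hab
      rcases a with _ | (_ | i)
      · rcases b with _ | (_ | j)
        · exact absurd rfl hab.1.2
        · show (0 : ℝ) + 1 ≤ l
          have : (1 : ℝ) ≤ l := by exact_mod_cast hl1
          linarith
        · show (0 : ℝ) + 1 ≤ β j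
          obtain ⟨z, hz⟩ := hβint j
          have h0 : (0 : ℝ) < z := by rw [← hz]; exact hstrict0 j
          have h0' : (0 : ℤ) < z := by exact_mod_cast h0
          have h1 : (1 : ℤ) ≤ z := h0'
          rw [hz]
          have : (1 : ℝ) ≤ z := by exact_mod_cast h1
          linarith
      · exact absurd hab.1 (not_hatLT_top _)
      · rcases b with _ | (_ | j)
        · exact absurd hab.1 (not_hatLT_bot _)
        · show β i + 1 ≤ (l : ℝ)
          obtain ⟨z, hz⟩ := hβint i
          have h0 : (z : ℝ) < l := by rw [← hz]; exact hstrictl i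
          have h0' : z < (l : ℤ) := by exact_mod_cast h0
          have h1 : z + 1 ≤ (l : ℤ) := h0'
          rw [hz]
          exact_mod_cast h1
        · show β i + 1 ≤ β j
          have hij : P.le i j := hab.1.1
          have hne : i ≠ j := by
            intro h
            exact hab.1.2 (by rw [h])
          obtain ⟨zi, hzi⟩ := hβint i
          obtain ⟨zj, hzj⟩ := hβint j
          have h0 : (zi : ℝ) < zj := by rw [← hzi, ← hzj]; exact hstrictm i j hij hne
          have h0' : zi < zj := by exact_mod_cast h0
          have h1 : zi + 1 ≤ zj := h0'
          rw [hzi, hzj]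
          exact_mod_cast h1
    funext k
    obtain ⟨c1, hc1⟩ := htN_spec P (some (some k))
    obtain ⟨s, c2, hc2⟩ := exists_chain (P := P) (hatLE_top (some (some k)))
    have hs : htN P (some (some k)) + s = l := by
      have := htN_add hl hc2
      rw [htop] at this
      omega
    have hlow := chain_step_sum (δ := 1) hW _ c1 _ _ hc1
    have hup := chain_step_sum (δ := 1) hW _ c2 _ _ hc2
    have h1 : (htN P (some (some k)) : ℝ) ≤ β k := by
      simpa [extV, hatBot] using hlow
    have h2 : β k + (s : ℝ) ≤ l := by
      simpa [extV, hatTop] using hup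
    have h3 : (htN P (some (some k)) : ℝ) + s = l := by exact_mod_cast hs
    show β k = alphaP P k
    unfold alphaP
    linarith
  · -- duality
    have hfin : (edgeVecs P).Finite :=
      Set.Finite.subset (Set.finite_range fun p : HatP d × HatP d => rho p.1 p.2)
        (by rintro v ⟨a, b, hab, rfl⟩; exact ⟨(a, b), rfl⟩)
    obtain ⟨cl, hcl⟩ := htN_spec P (hatTop d)
    have h0Q : (0 : Fin d → ℝ) ∈ QPoly P := by
      have hsum := chain_sum_rho _ cl _ _ hcl
      have hchi : chi (hatBot d) - chi (hatTop d) = (0 : Fin d → ℝ) := by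
        simp [chi, hatBot, hatTop]
      have hLne : ((htN P (hatTop d) : ℝ)) ≠ 0 := by
        rw [htop]
        exact ne_of_gt hlr
      have hmem := (convex_convexHull ℝ (edgeVecs P)).sum_mem
        (t := (Finset.univ : Finset (Fin (htN P (hatTop d)))))
        (w := fun _ => ((htN P (hatTop d) : ℝ))⁻¹)
        (z := fun j => rho (cl j.castSucc) (cl j.succ))
        (fun j _ => by positivity)
        (by
          rw [Finset.sum_const, Finset.card_univ, Fintype.card_fin, nsmul_eq_mul,
            mul_inv_cancel₀ hLne])
        (fun j _ => subset_convexHull ℝ _ ⟨_, _, hcl.2.2 j, rfl⟩)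
      rw [← Finset.smul_sum, hsum, hchi, smul_zero] at hmem
      exact hmem
    ext x
    constructor
    · -- dualPoly ⊆ QPoly
      intro hx
      by_contra hxQ
      obtain ⟨f, u, hfu, hux⟩ := geometric_hahn_banach_closed_point
        (convex_convexHull ℝ (edgeVecs P)) (hfin.isClosed_convexHull (𝕜 := ℝ)) hxQ
      have hu0 : 0 < u := by
        have := hfu 0 h0Q
        simpa using this
      have hbasis : ∀ k : Fin d, (fun j => if k = j then (1 : ℝ) else 0)
          = chi (some (some k) : HatP d) := by
        intro k
        funext j
        rcases eq_or_ne j k with rfl | hjk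
        · simp [chi]
        · simp [chi, hjk, Ne.symm hjk]
      have hf : ∀ y : Fin d → ℝ, f y = ∑ k, y k * f (chi (some (some k))) := by
        intro y
        conv_lhs => rw [pi_eq_sum_univ y]
        rw [map_sum]
        refine Finset.sum_congr rfl fun k _ => ?_
        rw [map_smul, smul_eq_mul, hbasis k]
      set F : Fin d → ℝ := fun k => f (chi (some (some k))) with hF
      have hcovF : ∀ a b, IsCover P a b → extV 0 F a - extV 0 F b < u := by
        intro a b hab
        have hmem : rho a b ∈ QPoly P := subset_convexHull ℝ _ ⟨a, b, hab, rfl⟩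
        have hfv := hfu _ hmem
        rw [hf] at hfv
        rw [← sum_rho_mul]
        exact hfv
      set z : Fin d → ℝ := fun k => F k / u with hz
      have hzF : ∀ yy : HatP d, extV 0 z yy = extV 0 F yy / u := by
        intro yy
        rcases yy with _ | (_ | i) <;> simp [extV, hz]
      have hWmono : ∀ a b, IsCover P a b →
          (extV 0 z a + (htN P a : ℝ)) + 0 ≤ extV 0 z b + (htN P b : ℝ) := by
        intro a b hab
        have h1 := hcovF a b hab
        have h2 : (htN P b : ℝ) = htN P a + 1 := by exact_mod_cast htN_cover hl hab
        rw [hzF, hzF]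
        have h3 : extV 0 F a / u - extV 0 F b / u < 1 := by
          rw [div_sub_div_same, div_lt_one hu0]
          exact h1
        linarith
      have hWle : ∀ yy zz, hatLE P yy zz →
          extV 0 z yy + (htN P yy : ℝ) ≤ extV 0 z zz + (htN P zz : ℝ) := by
        intro yy zz h
        obtain ⟨s, c, hc⟩ := exists_chain (P := P) h
        have := chain_step_sum (W := fun w => extV 0 z w + (htN P w : ℝ)) (δ := 0)
          hWmono s c yy zz hc
        simpa using this
      have hαz : (alphaP P + z) ∈ (l : ℝ) • orderPoly P := by
        apply (mem_smul_order hl0).mpr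
        constructor
        · intro i
          constructor
          · have h := hWle (hatBot d) (some (some i)) trivial
            simp only [extV, hbot', hatBot, Nat.cast_zero, add_zero, zero_add] at h
            show 0 ≤ alphaP P i + z i
            unfold alphaP
            linarith
          · have h := hWle (some (some i)) (hatTop d) (hatLE_top _)
            simp only [extV, htop', hatTop, add_zero, zero_add] at h
            show alphaP P i + z i ≤ (l : ℝ)
            unfold alphaP
            linarith
        · intro i j hij
          have h : hatLE P (some (some i)) (some (some j)) := hij
          have h2 := hWle _ _ h
          simp only [extV] at h2
          show alphaP P i + z i ≤ alphaP P j + z j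
          unfold alphaP
          linarith
      have hzT : z ∈ (fun x => x - alphaP P) '' ((l : ℝ) • orderPoly P) :=
        ⟨alphaP P + z, hαz, by funext k; simp⟩
      have hfinal := hx z hzT
      have hsame : ∑ k, x k * z k = (∑ k, x k * F k) / u := by
        rw [Finset.sum_div]
        refine Finset.sum_congr rfl fun k _ => ?_
        rw [hz]
        ring
      rw [hsame, ← hf x] at hfinal
      have := (div_le_one hu0).mp hfinal
      linarith
    · -- QPoly ⊆ dualPoly
      intro hx
      have hconv : Convex ℝ (dualPoly ((fun x => x - alphaP P) '' ((l : ℝ) • orderPoly P))) := by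
        intro p hp q hq a b ha hb hab z hz
        have hp' := hp z hz
        have hq' := hq z hz
        have hexp : ∑ k, (a • p + b • q) k * z k
            = a * ∑ k, p k * z k + b * ∑ k, q k * z k := by
          rw [Finset.mul_sum, Finset.mul_sum, ← Finset.sum_add_distrib]
          refine Finset.sum_congr rfl fun k _ => ?_
          simp only [Pi.add_apply, Pi.smul_apply, smul_eq_mul]
          ring
        show ∑ k, (a • p + b • q) k * z k ≤ 1
        rw [hexp]
        nlinarith
      refine convexHull_min ?_ hconv hx
      rintro v ⟨a, b, hab, rfl⟩ y hy
      obtain ⟨sx, hsx, rfl⟩ := hy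
      rw [sum_rho_mul]
      have hsx' := (mem_smul_order hl0).mp hsx
      have hext : ∀ yy : HatP d, extV 0 (sx - alphaP P) yy
          = extV (l : ℝ) sx yy - (htN P yy : ℝ) := by
        intro yy
        rcases yy with _ | (_ | i)
        · simp [extV, hbot']
        · simp [extV, htop']
        · simp [extV, alphaP]
      rw [hext, hext]
      have hcov : (htN P b : ℝ) = htN P a + 1 := by exact_mod_cast htN_cover hl hab
      have hm := cover_extV_mono hl1 hsx'.1 hsx'.2 hab
      linarith
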